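/- Let d be a positive nonsquare integer and z a positive integer. Define the Newton sequence x_0 = z, x_n = (x_{n-1}² + d)/(2x_{n-1}) in the rationals. Then x_n = Q_{2^n}(d,z) = N_{2^n}(d,z)/D_{2^n}(d,z) for all n ≥ 0. -/

import Mathlib

/-- Rédei polynomial `N_n(d,x)` as a rational number. -/
def redeiN (d x : ℚ) (n : ℕ) : ℚ :=
  ∑ i ∈ Finset.range (n / 2 + 1), (n.choose (2 * i) : ℚ) * d ^ i * x ^ (n - 2 * i)

/-- Rédei polynomial `D_n(d,x)` as a rational number. -/
def redeiD (d x : ℚ) (n : ℕ) : ℚ :=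
  ∑ i ∈ Finset.range (n / 2 + 1), (n.choose (2 * i + 1) : ℚ) * d ^ i * x ^ (n - 2 * i - 1)

/-- Rédei rational function `Q_n(d,x)`. -/
def redeiQ (d x : ℚ) (n : ℕ) : ℚ := redeiN d x n / redeiD d x n

/-!
In `ℚ[ω]` with `ω² = d` one has `(z + ω)ⁿ = N_n(d,z) + D_n(d,z) ω` by the binomial theorem, so
squaring gives `N_{2m} = N_m² + d D_m²` and `D_{2m} = 2 N_m D_m`. This is precisely Newton's
step `x ↦ (x² + d) / (2x)` applied to `x = N_m / D_m`, and `x_0 = z = N_1 / D_1`.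
-/

open Finset QuadraticAlgebra

theorem Finset.sum_range_two_mul {M : Type*} [AddCommMonoid M] (f : ℕ → M) (K : ℕ) :
    ∑ m ∈ range (2 * K), f m = ∑ i ∈ range K, (f (2 * i) + f (2 * i + 1)) := by
  induction K with
  | zero => simp
  | succ K ih => rw [mul_add_one, sum_range_succ, sum_range_succ, sum_range_succ, ih, add_assoc]

-- Holds even when `N`, `D` or `2` vanish, since then both sides are `0` by `x / 0 = 0`.
theorem div_newton_step {K : Type*} [Field K] (a N D : K) :
    ((N / D) ^ 2 + a) / (2 * (N / D)) = (N ^ 2 + a * D ^ 2) / (2 * N * D) := by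
  rcases eq_or_ne D 0 with rfl | hD
  · simp
  rcases eq_or_ne N 0 with rfl | hN
  · simp
  rcases eq_or_ne (2 : K) 0 with h2 | h2
  · simp [h2]
  field_simp

theorem QuadraticAlgebra.omega_sq {R : Type*} [CommRing R] (a : R) :
    (ω : QuadraticAlgebra R a 0) ^ 2 = algebraMap R _ a := by
  rw [sq, omega_mul_omega_eq_algebraMap]
  simp

theorem algebraMap_add_omega_pow (d z : ℚ) (n : ℕ) :
    (algebraMap ℚ _ z + ω : QuadraticAlgebra ℚ d 0) ^ n =
      ⟨redeiN d z n, redeiD d z n⟩ := by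
  -- pad the binomial sum with zero terms so that it splits into `n / 2 + 1` even-odd pairs
  have hpad : range (n + 1) ⊆ range (2 * (n / 2 + 1)) := range_subset_range.mpr (by omega)
  rw [mk_eq_add_smul_omega, Algebra.smul_def, add_comm, add_pow,
    sum_subset hpad fun m _ hm => by
      rw [Nat.choose_eq_zero_of_lt (by simpa using hm), Nat.cast_zero, mul_zero],
    sum_range_two_mul, redeiN, redeiD, map_sum, map_sum, sum_mul, ← sum_add_distrib]
  refine sum_congr rfl fun i _ => ?_
  rw [pow_succ, pow_mul, omega_sq, Nat.sub_sub]
  simp only [map_mul, map_pow, map_natCast]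
  ring

theorem redei_two_mul (d z : ℚ) (m : ℕ) :
    (⟨redeiN d z (2 * m), redeiD d z (2 * m)⟩ : QuadraticAlgebra ℚ d 0) =
      ⟨redeiN d z m, redeiD d z m⟩ ^ 2 := by
  rw [← algebraMap_add_omega_pow, ← algebraMap_add_omega_pow, pow_mul']

theorem redeiN_two_mul (d z : ℚ) (m : ℕ) :
    redeiN d z (2 * m) = redeiN d z m ^ 2 + d * redeiD d z m ^ 2 := by
  have h := congrArg re (redei_two_mul d z m)
  simp only [sq, mk_mul_mk, zero_mul, add_zero] at h
  linear_combination h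

theorem redeiD_two_mul (d z : ℚ) (m : ℕ) :
    redeiD d z (2 * m) = 2 * redeiN d z m * redeiD d z m := by
  have h := congrArg im (redei_two_mul d z m)
  simp only [sq, mk_mul_mk, zero_mul, add_zero] at h
  linear_combination h

theorem redei_newton_general (d : ℤ) (z : ℤ)
    (x : ℕ → ℚ) (hx0 : x 0 = z)
    (hxrec : ∀ n : ℕ, x (n + 1) = (x n ^ 2 + d) / (2 * x n)) :
    ∀ n : ℕ, x n = redeiN (d : ℚ) (z : ℚ) (2 ^ n) / redeiD (d : ℚ) (z : ℚ) (2 ^ n) := by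
  intro n
  induction n with
  | zero => simp [hx0, redeiN, redeiD]
  | succ n ih =>
    rw [hxrec, ih, div_newton_step, pow_succ' (2 : ℕ) n, redeiN_two_mul, redeiD_two_mul]

theorem redei_newton (d : ℤ) (z : ℤ) (hd : 0 < d) (hsq : ¬ IsSquare d) (hz : 0 < z)
    (x : ℕ → ℚ) (hx0 : x 0 = z)
    (hxrec : ∀ n : ℕ, x (n + 1) = (x n ^ 2 + d) / (2 * x n)) :
    ∀ n : ℕ, x n = redeiN (d : ℚ) (z : ℚ) (2 ^ n) / redeiD (d : ℚ) (z : ℚ) (2 ^ n) :=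
  redei_newton_general d z x hx0 hxrec
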